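/- arXiv:1604.01578 — 3 statements merged into one kernel-verified Lean document; each statement's English description precedes it below -/
import Mathlib

section
/- Let d ≥ 1 and let N : ℝ^d → ℝ be a seminorm (nonnegative, positively homogeneous of degree 1, subadditive, and symmetric: N(-x) = N(x)) such that N(x) is an integer for every x ∈ ℤ^d. Then there exists a finite subset F ⊆ ℤ^d such that N(x) = max_{y ∈ F} ⟨x, y⟩ for all x ∈ ℝ^d (Thurston's theorem). -/
/-!
A seminorm `p` on `ℝ^d` is convex, hence Lipschitz, hence (Rademacher) differentiable on a dense
set. Where `p` is differentiable at `x`, its gradient `g` satisfies `⟪z, g⟫ ≤ p z` for all `z`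
(subadditivity) and `⟪x, g⟫ = p x` (Euler's identity). Moreover `g` is an integer vector: if `zₙ`
is a lattice point at bounded distance from `n • x`, homogeneity turns differentiability at `x`
into `p (zₙ + w) - p zₙ → ⟪w, g⟫`, and the left side is an integer for every lattice vector `w`.
So `p` agrees with the maximum of `⟪·, y⟫` over the finitely many integer points `y` of its dual
ball on a dense set, and hence everywhere by continuity.
-/

open RealInnerProductSpace Filter Topology Asymptotics Set Submodule Gradient

namespace Seminorm

variable {E : Type*} [NormedAddCommGroup E] [NormedSpace ℝ E] (p : Seminorm ℝ E)

theorem apply_smul_of_nonneg {t : ℝ} (ht : 0 ≤ t) (x : E) : p (t • x) = t * p x := by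
  rw [map_smul_eq_mul, Real.norm_of_nonneg ht]

theorem continuous_of_finiteDimensional [FiniteDimensional ℝ E] : Continuous p :=
  continuousOn_univ.mp (p.convexOn.continuousOn isOpen_univ)

theorem exists_lipschitzWith [FiniteDimensional ℝ E] : ∃ K, LipschitzWith K p := by
  obtain ⟨C, -, hC⟩ := p.bound_of_continuous_normedSpace p.continuous_of_finiteDimensional
  refine ⟨C.toNNReal, LipschitzWith.of_dist_le_mul fun x y => ?_⟩
  rw [Real.dist_eq, dist_eq_norm]
  exact (abs_sub_map_le_sub p x y).trans ((hC _).trans (by gcongr; exact Real.le_coe_toNNReal C))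

theorem dense_differentiableAt [FiniteDimensional ℝ E] :
    Dense {x | DifferentiableAt ℝ p x} := by
  obtain ⟨K, hK⟩ := p.exists_lipschitzWith
  borelize E
  exact MeasureTheory.Measure.dense_of_ae
    (hK.ae_differentiableAt (μ := (Module.finBasis ℝ E).addHaar))

variable {p} {ℓ : E →L[ℝ] ℝ} {x : E}

theorem le_of_hasFDerivAt (hx : HasFDerivAt p ℓ x) (z : E) : ℓ z ≤ p z := by
  have hline : HasDerivAt (fun t : ℝ => p (x + t • z)) (ℓ z) 0 := by
    have hz : HasDerivAt (fun t : ℝ => x + t • z) z 0 := by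
      simpa using ((hasDerivAt_id (0 : ℝ)).smul_const z).const_add x
    exact (by simpa using hx : HasFDerivAt p ℓ (x + (0 : ℝ) • z)).comp_hasDerivAt 0 hz
  refine le_of_tendsto hline.tendsto_slope_zero_right ?_
  filter_upwards [self_mem_nhdsWithin] with t (ht : 0 < t)
  have : p (x + t • z) ≤ p x + t * p z := (map_add_le_add p _ _).trans_eq
    (by rw [p.apply_smul_of_nonneg ht.le])
  rw [zero_add, zero_smul, add_zero, smul_eq_mul, inv_mul_le_iff₀ ht]
  linarith

theorem hasFDerivAt_apply_self (hx : HasFDerivAt p ℓ x) : ℓ x = p x := by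
  have hray : HasDerivAt (fun t : ℝ => p (t • x)) (ℓ x) 1 := by
    have hx' : HasDerivAt (fun t : ℝ => t • x) x 1 := by
      simpa using (hasDerivAt_id (1 : ℝ)).smul_const x
    exact (by simpa using hx : HasFDerivAt p ℓ ((1 : ℝ) • x)).comp_hasDerivAt 1 hx'
  have hlin : HasDerivAt (fun t : ℝ => p (t • x)) (p x) 1 := by
    have hid : HasDerivAt (fun t : ℝ => t * p x) (p x) 1 := by
      simpa using (hasDerivAt_id (1 : ℝ)).mul_const (p x)
    refine hid.congr_of_eventuallyEq ?_
    filter_upwards [lt_mem_nhds one_pos] with t ht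
    exact p.apply_smul_of_nonneg ht.le x
  simpa using hray.unique hlin

end Seminorm

section Homogeneous

variable {E : Type*} [NormedAddCommGroup E] [NormedSpace ℝ E] {f : E → ℝ} {ℓ : E →L[ℝ] ℝ} {x : E}

theorem HasFDerivAt.tendsto_sub_sub_of_homogeneous
    (hf : ∀ t : ℝ, 0 < t → ∀ y, f (t • y) = t * f y) (hx : HasFDerivAt f ℓ x)
    {v : ℕ → E} (hv : v =O[atTop] (fun _ => (1 : ℝ))) :
    Tendsto (fun n : ℕ => f ((n : ℝ) • x + v n) - n * f x - ℓ (v n)) atTop (𝓝 0) := by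
  set h : ℕ → E := fun n => (n : ℝ)⁻¹ • v n
  have hh : Tendsto h atTop (𝓝 0) := by
    refine (isLittleO_one_iff ℝ).mp ?_
    have hinv : (fun n : ℕ => (n : ℝ)⁻¹) =o[atTop] (fun _ => (1 : ℝ)) :=
      (isLittleO_one_iff ℝ).mpr tendsto_inv_atTop_nhds_zero_nat
    simpa using hinv.smul_isBigO hv
  have hrem := (isBigO_refl (fun n : ℕ => (n : ℝ)) atTop).smul_isLittleO
    ((hasFDerivAt_iff_isLittleO_nhds_zero.mp hx).comp_tendsto hh)
  have hpos : ∀ᶠ n : ℕ in atTop, (0 : ℝ) < n := by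
    filter_upwards [eventually_ge_atTop 1] with n hn
    exact_mod_cast hn
  have hvh : v =ᶠ[atTop] fun n => (n : ℝ) • h n := by
    filter_upwards [hpos] with n hn
    simp [h, smul_smul, hn.ne']
  refine ((isLittleO_one_iff ℝ).mp (hrem.trans_isBigO (hv.congr' hvh .rfl))).congr' ?_
  filter_upwards [hpos] with n hn
  have hvn : v n = (n : ℝ) • h n := by simp [h, smul_smul, hn.ne']
  have hfn : f ((n : ℝ) • x + v n) = n * f (x + h n) := by rw [hvn, ← smul_add, hf n hn]
  rw [hfn, hvn, map_smul]
  simp only [Function.comp_apply, smul_eq_mul]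
  ring

theorem HasFDerivAt.apply_mem_range_intCast_of_homogeneous
    (hf : ∀ t : ℝ, 0 < t → ∀ y, f (t • y) = t * f y) (hx : HasFDerivAt f ℓ x)
    {L : Submodule ℤ E} (hL : ∃ B, ∀ y, ∃ z ∈ L, ‖y - z‖ ≤ B)
    (hfL : ∀ z ∈ L, f z ∈ range ((↑) : ℤ → ℝ)) {w : E} (hw : w ∈ L) :
    ℓ w ∈ range ((↑) : ℤ → ℝ) := by
  obtain ⟨B, hB⟩ := hL
  choose z hzL hz using fun n : ℕ => hB ((n : ℝ) • x)
  have hv : (fun n => z n - (n : ℝ) • x) =O[atTop] (fun _ => (1 : ℝ)) :=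
    isBigO_of_le' _ fun n => by simpa [norm_sub_rev] using hz n
  have hvw : (fun n => z n - (n : ℝ) • x + w) =O[atTop] (fun _ => (1 : ℝ)) :=
    hv.add (isBigO_const_const w one_ne_zero atTop)
  have hdiff : Tendsto (fun n => f (z n + w) - f (z n)) atTop (𝓝 (ℓ w)) := by
    have := ((hx.tendsto_sub_sub_of_homogeneous hf hvw).sub
      (hx.tendsto_sub_sub_of_homogeneous hf hv)).add_const (ℓ w)
    convert this using 2 with n
    · rw [← add_assoc, add_sub_cancel, map_add]
      ring
    · simp
  refine Int.isClosedEmbedding_coe_real.isClosed_range.mem_of_tendsto hdiff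
    (.of_forall fun n => ?_)
  obtain ⟨m₁, hm₁⟩ := hfL _ (hzL n)
  obtain ⟨m₂, hm₂⟩ := hfL _ (add_mem (hzL n) hw)
  exact ⟨m₂ - m₁, by push_cast; rw [hm₁, hm₂]⟩

end Homogeneous

theorem ZSpan.exists_mem_norm_sub_le {ι E : Type*} [Fintype ι] [NormedAddCommGroup E]
    [NormedSpace ℝ E] (b : Module.Basis ι ℝ E) :
    ∃ B, ∀ y, ∃ z ∈ span ℤ (range b), ‖y - z‖ ≤ B :=
  ⟨∑ i, ‖b i‖, fun y => ⟨ZSpan.floor b y, (ZSpan.floor b y).2, ZSpan.norm_fract_le b y⟩⟩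

abbrev EuclideanSpace.intLattice (ι : Type*) [Fintype ι] : Submodule ℤ (EuclideanSpace ℝ ι) :=
  span ℤ (range (EuclideanSpace.basisFun ι ℝ).toBasis)

theorem EuclideanSpace.mem_intLattice_iff {ι : Type*} [Fintype ι] {x : EuclideanSpace ℝ ι} :
    x ∈ intLattice ι ↔ ∀ i, ∃ m : ℤ, x i = m := by
  rw [Module.Basis.mem_span_iff_repr_mem]
  simp [eq_comm]

namespace Seminorm

section InnerProductSpace

variable {E : Type*} [NormedAddCommGroup E] [InnerProductSpace ℝ E] (p : Seminorm ℝ E)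

theorem isBounded_setOf_forall_inner_le [FiniteDimensional ℝ E] :
    Bornology.IsBounded {y : E | ∀ z, ⟪z, y⟫ ≤ p z} := by
  obtain ⟨C, hC₀, hC⟩ := p.bound_of_continuous_normedSpace p.continuous_of_finiteDimensional
  refine (Metric.isBounded_closedBall (x := 0) (r := C)).subset fun y hy => ?_
  have : ‖y‖ ^ 2 ≤ C * ‖y‖ := by
    rw [← real_inner_self_eq_norm_sq]
    exact (hy y).trans (hC y)
  rw [mem_closedBall_zero_iff]
  nlinarith [norm_nonneg y]

variable [CompleteSpace E] {p} {x : E}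

theorem inner_gradient_le (hx : DifferentiableAt ℝ p x) (z : E) : ⟪z, ∇ p x⟫ ≤ p z := by
  simpa [real_inner_comm] using le_of_hasFDerivAt hx.hasGradientAt.hasFDerivAt z

theorem inner_gradient_self (hx : DifferentiableAt ℝ p x) : ⟪x, ∇ p x⟫ = p x := by
  simpa [real_inner_comm] using hasFDerivAt_apply_self hx.hasGradientAt.hasFDerivAt

end InnerProductSpace

open EuclideanSpace

variable {ι : Type*} [Fintype ι] {p : Seminorm ℝ (EuclideanSpace ℝ ι)}

theorem gradient_mem_intLattice (hp : ∀ z ∈ intLattice ι, p z ∈ range ((↑) : ℤ → ℝ))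
    {x : EuclideanSpace ℝ ι} (hx : DifferentiableAt ℝ p x) : ∇ p x ∈ intLattice ι := by
  classical
  refine mem_intLattice_iff.mpr fun i => ?_
  obtain ⟨m, hm⟩ := hx.hasGradientAt.hasFDerivAt.apply_mem_range_intCast_of_homogeneous
    (fun t ht => p.apply_smul_of_nonneg ht.le) (ZSpan.exists_mem_norm_sub_le _) hp
    (subset_span (mem_range_self i))
  refine ⟨m, ?_⟩
  rw [hm, InnerProductSpace.toDual_apply_apply, OrthonormalBasis.coe_toBasis,
    EuclideanSpace.basisFun_apply, EuclideanSpace.inner_single_right, one_mul, conj_trivial]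

theorem exists_finset_intLattice_eq_sup'_inner
    (hp : ∀ z ∈ intLattice ι, p z ∈ range ((↑) : ℤ → ℝ)) :
    ∃ (F : Finset (EuclideanSpace ℝ ι)) (hF : F.Nonempty),
      (∀ y ∈ F, y ∈ intLattice ι) ∧ ∀ x, p x = F.sup' hF (fun y => ⟪x, y⟫) := by
  set S := {y | ∀ z, ⟪z, y⟫ ≤ p z} ∩ intLattice ι
  have hS : S.Finite := ZSpan.setFinite_inter _ p.isBounded_setOf_forall_inner_le
  have h0 : (0 : EuclideanSpace ℝ ι) ∈ S := ⟨fun z => by simp, zero_mem _⟩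
  have hF : hS.toFinset.Nonempty := ⟨0, hS.mem_toFinset.mpr h0⟩
  have hgrad : ∀ x, DifferentiableAt ℝ p x → ∇ p x ∈ hS.toFinset := fun x hx =>
    hS.mem_toFinset.mpr ⟨inner_gradient_le hx, gradient_mem_intLattice hp hx⟩
  have hsup_le : ∀ x, hS.toFinset.sup' hF (fun y => ⟪x, y⟫) ≤ p x := fun x =>
    Finset.sup'_le _ _ fun y hy => (hS.mem_toFinset.mp hy).1 x
  have heq : ⇑p = fun x => hS.toFinset.sup' hF (fun y => ⟪x, y⟫) :=
    Continuous.ext_on p.dense_differentiableAt p.continuous_of_finiteDimensional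
      (Continuous.finset_sup'_apply hF fun y _ => continuous_id.inner continuous_const)
      fun x hx => le_antisymm
        ((inner_gradient_self hx).symm.trans_le (Finset.le_sup' _ (hgrad x hx))) (hsup_le x)
  exact ⟨hS.toFinset, hF, fun y hy => (hS.mem_toFinset.mp hy).2, congrFun heq⟩

end Seminorm

theorem thurston_seminorm_integer_polyhedral_general
    (d : ℕ) (N : EuclideanSpace ℝ (Fin d) → ℝ)
    (hhom : ∀ (c : ℝ) (x : EuclideanSpace ℝ (Fin d)), N (c • x) = |c| * N x)
    (hadd : ∀ x y : EuclideanSpace ℝ (Fin d), N (x + y) ≤ N x + N y)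
    (hint : ∀ x : EuclideanSpace ℝ (Fin d),
      (∀ i, ∃ m : ℤ, x i = (m : ℝ)) → ∃ m : ℤ, N x = (m : ℝ)) :
    ∃ (F : Finset (EuclideanSpace ℝ (Fin d))) (hF : F.Nonempty),
      (∀ y ∈ F, ∀ i, ∃ m : ℤ, y i = (m : ℝ)) ∧
      ∀ x : EuclideanSpace ℝ (Fin d), N x = F.sup' hF (fun y => ⟪x, y⟫) := by
  let p : Seminorm ℝ (EuclideanSpace ℝ (Fin d)) :=
    Seminorm.of N hadd fun c x => by rw [hhom, Real.norm_eq_abs]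
  have hp : ∀ z ∈ EuclideanSpace.intLattice (Fin d), p z ∈ range ((↑) : ℤ → ℝ) := fun z hz =>
    (hint z (EuclideanSpace.mem_intLattice_iff.mp hz)).imp fun m hm => hm.symm
  obtain ⟨F, hF, hFL, hpF⟩ := p.exists_finset_intLattice_eq_sup'_inner hp
  exact ⟨F, hF, fun y hy => EuclideanSpace.mem_intLattice_iff.mp (hFL y hy), hpF⟩

/-- **Thurston's theorem.** A seminorm on `ℝ^d` taking integer values on `ℤ^d`
is the maximum of finitely many integer linear functionals. -/
theorem thurston_seminorm_integer_polyhedral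
    (d : ℕ) (hd : 1 ≤ d) (N : EuclideanSpace ℝ (Fin d) → ℝ)
    (hnonneg : ∀ x, 0 ≤ N x)
    (hhom : ∀ (c : ℝ) (x : EuclideanSpace ℝ (Fin d)), N (c • x) = |c| * N x)
    (hadd : ∀ x y : EuclideanSpace ℝ (Fin d), N (x + y) ≤ N x + N y)
    (hsymm : ∀ x : EuclideanSpace ℝ (Fin d), N (-x) = N x)
    (hint : ∀ x : EuclideanSpace ℝ (Fin d),
      (∀ i, ∃ m : ℤ, x i = (m : ℝ)) → ∃ m : ℤ, N x = (m : ℝ)) :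
    ∃ (F : Finset (EuclideanSpace ℝ (Fin d))) (hF : F.Nonempty),
      (∀ y ∈ F, ∀ i, ∃ m : ℤ, y i = (m : ℝ)) ∧
      ∀ x : EuclideanSpace ℝ (Fin d), N x = F.sup' hF (fun y => ⟪x, y⟫) :=
  thurston_seminorm_integer_polyhedral_general d N hhom hadd hint
end

section
/- Let C ⊆ ℝ^d be a nonempty compact convex set with support function N(x) = max_{y ∈ C} ⟨x, y⟩, and let y₀ ∈ C be a point exposed by x₀ ∈ ℝ^d, meaning ⟨x₀, y⟩ < ⟨x₀, y₀⟩ for every y ∈ C \ {y₀}. If (xₙ) is a sequence in ℝ^d with supₙ ‖xₙ − n·x₀‖ < ∞, then limₙ (N(xₙ) − ⟨xₙ, y₀⟩) = 0. -/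
/-!
Choose maximisers `yₙ ∈ C` of `⟪xₙ, ·⟫`. Splitting `xₙ = n • x₀ + (xₙ - n • x₀)` gives
`(N xₙ - ⟪xₙ, y₀⟫) + n (⟪x₀, y₀⟫ - ⟪x₀, yₙ⟫) = ⟪xₙ - n • x₀, yₙ - y₀⟫ ≤ M ‖yₙ - y₀‖`,
with both summands on the left nonnegative. As `C` is bounded, the second summand is `O(1)`,
so `⟪x₀, yₙ⟫ → ⟪x₀, y₀⟫`; since `y₀` is the only point of the compact set `C` where `⟪x₀, ·⟫`
takes this value, `yₙ → y₀`, and then the first summand is squeezed to `0`.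
-/

open RealInnerProductSpace Filter Topology

lemma IsCompact.tendsto_nhds_of_tendsto_comp {X Y ι : Type*} [TopologicalSpace X]
    [TopologicalSpace Y] [T2Space Y] {s : Set X} {f : X → Y} {l : Filter ι} {u : ι → X} {y₀ : X}
    (hs : IsCompact s) (hf : Continuous f) (hfy₀ : ∀ y ∈ s, f y = f y₀ → y = y₀)
    (hu : ∀ᶠ i in l, u i ∈ s) (hfu : Tendsto (f ∘ u) l (𝓝 (f y₀))) :
    Tendsto u l (𝓝 y₀) := by
  refine hs.tendsto_nhds_of_unique_mapClusterPt hu fun z hz hzu => hfy₀ z hz ?_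
  exact eq_of_nhds_neBot ((hzu.tendsto_comp (hf.tendsto z)).clusterPt.mono hfu)

lemma tendsto_zero_of_natCast_mul_le {g : ℕ → ℝ} {B : ℝ} (hg : ∀ n, 0 ≤ g n)
    (hB : ∀ n : ℕ, n * g n ≤ B) : Tendsto g atTop (𝓝 0) := by
  refine squeeze_zero' (.of_forall hg) ?_ (tendsto_const_div_atTop_nhds_zero_nat B)
  filter_upwards [eventually_gt_atTop 0] with n hn
  rw [le_div_iff₀ (by exact_mod_cast hn), mul_comm]
  exact hB n

lemma inner_sub_inner_add_mul_inner_sub_le {E : Type*} [NormedAddCommGroup E]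
    [InnerProductSpace ℝ E] (x x₀ y y₀ : E) (t : ℝ) :
    ⟪x, y⟫ - ⟪x, y₀⟫ + t * (⟪x₀, y₀⟫ - ⟪x₀, y⟫) ≤ ‖x - t • x₀‖ * ‖y - y₀‖ := by
  calc ⟪x, y⟫ - ⟪x, y₀⟫ + t * (⟪x₀, y₀⟫ - ⟪x₀, y⟫) = ⟪x - t • x₀, y - y₀⟫ := by
        simp only [inner_sub_left, inner_sub_right, real_inner_smul_left]; ring
    _ ≤ ‖x - t • x₀‖ * ‖y - y₀‖ := real_inner_le_norm _ _

theorem support_function_almost_attained_at_exposed_point_general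
    (d : ℕ) (C : Set (EuclideanSpace ℝ (Fin d)))
    (hCcomp : IsCompact C)
    (N : EuclideanSpace ℝ (Fin d) → ℝ)
    (hN : ∀ x : EuclideanSpace ℝ (Fin d),
      IsGreatest ((fun y => ⟪x, y⟫) '' C) (N x))
    (y₀ : EuclideanSpace ℝ (Fin d)) (hy₀ : y₀ ∈ C)
    (x₀ : EuclideanSpace ℝ (Fin d))
    (hexp : ∀ y ∈ C, y ≠ y₀ → ⟪x₀, y⟫ < ⟪x₀, y₀⟫)
    (x : ℕ → EuclideanSpace ℝ (Fin d))
    (hx : ∃ M : ℝ, ∀ n : ℕ, ‖x n - (n : ℝ) • x₀‖ ≤ M) :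
    Tendsto (fun n => N (x n) - ⟪x n, y₀⟫) atTop (nhds 0) := by
  obtain ⟨M, hM⟩ := hx
  obtain ⟨D, hCD⟩ := hCcomp.isBounded.subset_closedBall y₀
  choose y hyC hyN using fun n => (hN (x n)).1
  have hx₀gap : ∀ n, 0 ≤ ⟪x₀, y₀⟫ - ⟪x₀, y n⟫ := fun n => by
    obtain rfl | hne := eq_or_ne (y n) y₀
    · exact (sub_self _).ge
    · exact (sub_pos.2 (hexp _ (hyC n) hne)).le
  have hNgap : ∀ n, 0 ≤ N (x n) - ⟪x n, y₀⟫ := fun n =>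
    sub_nonneg.2 ((hN (x n)).2 ⟨y₀, hy₀, rfl⟩)
  have hkey : ∀ n : ℕ, N (x n) - ⟪x n, y₀⟫ + n * (⟪x₀, y₀⟫ - ⟪x₀, y n⟫) ≤ M * ‖y n - y₀‖ :=
    fun n => hyN n ▸ (inner_sub_inner_add_mul_inner_sub_le _ _ _ _ _).trans
      (mul_le_mul_of_nonneg_right (hM n) (norm_nonneg _))
  have hy : Tendsto y atTop (𝓝 y₀) := by
    refine hCcomp.tendsto_nhds_of_tendsto_comp (continuous_const.inner continuous_id)
      (fun z hz hzy => by_contra fun hne => (hexp z hz hne).ne hzy) (.of_forall hyC) ?_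
    have hx₀gap_bdd : ∀ n : ℕ, n * (⟪x₀, y₀⟫ - ⟪x₀, y n⟫) ≤ M * D := fun n => by
      have := mem_closedBall_iff_norm.1 (hCD (hyC n))
      nlinarith [hkey n, hNgap n, norm_nonneg (x n - (n : ℝ) • x₀), hM n]
    simpa [Function.comp_def] using
      (tendsto_zero_of_natCast_mul_le hx₀gap hx₀gap_bdd).const_sub ⟪x₀, y₀⟫
  have hdist : Tendsto (fun n => M * ‖y n - y₀‖) atTop (𝓝 0) := by
    simpa using ((hy.sub_const y₀).norm.const_mul M)
  exact squeeze_zero hNgap (fun n => by nlinarith [hkey n, hx₀gap n, n.cast_nonneg (α := ℝ)]) hdist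

/-- If `y₀ ∈ C` is exposed by `x₀`, then along any sequence `xₙ` staying at bounded
distance from `n • x₀`, the support function `N(xₙ)` differs from `⟪xₙ, y₀⟫` by `o(1)`. -/
theorem support_function_almost_attained_at_exposed_point
    (d : ℕ) (C : Set (EuclideanSpace ℝ (Fin d)))
    (hCne : C.Nonempty) (hCcomp : IsCompact C) (hCconv : Convex ℝ C)
    (N : EuclideanSpace ℝ (Fin d) → ℝ)
    (hN : ∀ x : EuclideanSpace ℝ (Fin d),
      IsGreatest ((fun y => ⟪x, y⟫) '' C) (N x))
    (y₀ : EuclideanSpace ℝ (Fin d)) (hy₀ : y₀ ∈ C)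
    (x₀ : EuclideanSpace ℝ (Fin d))
    (hexp : ∀ y ∈ C, y ≠ y₀ → ⟪x₀, y⟫ < ⟪x₀, y₀⟫)
    (x : ℕ → EuclideanSpace ℝ (Fin d))
    (hx : ∃ M : ℝ, ∀ n : ℕ, ‖x n - (n : ℝ) • x₀‖ ≤ M) :
    Tendsto (fun n => N (x n) - ⟪x n, y₀⟫) atTop (nhds 0) :=
  support_function_almost_attained_at_exposed_point_general d C hCcomp N hN y₀ hy₀ x₀ hexp x hx
end

section
/- Let C ⊆ ℝ^d be a compact convex set, and let y₀ ∈ C be a point exposed by x₀ ∈ ℝ^d with the normalization ⟨x₀, y₀⟩ = 1. Let (xₙ) be a sequence in ℝ^d with supₙ ‖xₙ − n·x₀‖ < ∞, and for each n let yₙ ∈ C satisfy ⟨xₙ, yₙ⟩ = max_{y ∈ C} ⟨xₙ, y⟩. Then limₙ ‖yₙ − y₀‖ = 0. -/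
/-!
Comparing `yₙ` with the competitor `y₀` gives
`n (⟪x₀, y₀⟫ - ⟪x₀, yₙ⟫) ≤ ⟪xₙ - n x₀, yₙ - y₀⟫ ≤ M · diam C`, so `⟪x₀, yₙ⟫ → ⟪x₀, y₀⟫`.
By compactness every cluster point of `(yₙ)` lies in `C` on the level set `⟪x₀, ·⟫ = ⟪x₀, y₀⟫`,
which meets `C` only in the exposed point `y₀`.
-/

open RealInnerProductSpace Filter Topology

theorem IsCompact.tendsto_of_tendsto_comp {X Y ι : Type*} [TopologicalSpace X]
    [TopologicalSpace Y] [T2Space Y] {C : Set X} (hC : IsCompact C) {f : X → Y}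
    (hf : Continuous f) {y₀ : X} (hlevel : ∀ y ∈ C, f y = f y₀ → y = y₀)
    {l : Filter ι} {u : ι → X} (hu : ∀ᶠ i in l, u i ∈ C)
    (hfu : Tendsto (f ∘ u) l (𝓝 (f y₀))) : Tendsto u l (𝓝 y₀) := by
  refine hC.tendsto_nhds_of_unique_mapClusterPt hu fun z hzC hz => hlevel z hzC ?_
  have hfz : MapClusterPt (f z) l (f ∘ u) := hz.continuousAt_comp hf.continuousAt
  exact eq_of_nhds_neBot (hfz.clusterPt.mono hfu)

theorem tendsto_of_le_of_natCast_mul_sub_le {b : ℕ → ℝ} {a K : ℝ} (hle : ∀ n, b n ≤ a)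
    (hK : ∀ n : ℕ, n * (a - b n) ≤ K) : Tendsto b atTop (𝓝 a) := by
  have hlow : Tendsto (fun n : ℕ => a - K / n) atTop (𝓝 a) := by
    simpa using tendsto_const_nhds.sub
      (tendsto_const_nhds.div_atTop tendsto_natCast_atTop_atTop : Tendsto (fun n : ℕ => K / n) _ _)
  refine tendsto_of_tendsto_of_tendsto_of_le_of_le' hlow tendsto_const_nhds ?_
    (Eventually.of_forall hle)
  filter_upwards [eventually_gt_atTop 0] with n hn
  have hn' : (0 : ℝ) < n := Nat.cast_pos.2 hn
  have : a - b n ≤ K / n := by rw [le_div_iff₀ hn']; linarith [hK n]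
  linarith

section InnerProductSpace

variable {E : Type*} [NormedAddCommGroup E] [InnerProductSpace ℝ E]

theorem mul_inner_sub_le_of_inner_le {x v y y₀ : E} (t : ℝ) (h : ⟪x, y₀⟫ ≤ ⟪x, y⟫) :
    t * (⟪v, y₀⟫ - ⟪v, y⟫) ≤ ‖x - t • v‖ * ‖y - y₀‖ := by
  have hexpand : ⟪x - t • v, y - y₀⟫ = ⟪x, y⟫ - ⟪x, y₀⟫ + t * (⟪v, y₀⟫ - ⟪v, y⟫) := by
    simp only [inner_sub_left, inner_sub_right, real_inner_smul_left]
    ring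
  calc t * (⟪v, y₀⟫ - ⟪v, y⟫) ≤ ⟪x - t • v, y - y₀⟫ := by linarith
    _ ≤ ‖x - t • v‖ * ‖y - y₀‖ := real_inner_le_norm _ _

theorem mul_inner_sub_le_mul_diam_of_isGreatest {C : Set E} (hC : Bornology.IsBounded C)
    {x v y y₀ : E} (hy : y ∈ C) (hy₀ : y₀ ∈ C) (hmax : IsGreatest ((fun y' => ⟪x, y'⟫) '' C) ⟪x, y⟫)
    (t : ℝ) : t * (⟪v, y₀⟫ - ⟪v, y⟫) ≤ ‖x - t • v‖ * Metric.diam C :=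
  (mul_inner_sub_le_of_inner_le t (hmax.2 ⟨y₀, hy₀, rfl⟩)).trans <|
    mul_le_mul_of_nonneg_left (dist_eq_norm y y₀ ▸ Metric.dist_le_diam_of_mem hC hy hy₀)
      (norm_nonneg _)

end InnerProductSpace

theorem maximizers_converge_to_exposed_point_general
    (d : ℕ) (C : Set (EuclideanSpace ℝ (Fin d)))
    (hCcomp : IsCompact C)
    (y₀ : EuclideanSpace ℝ (Fin d)) (hy₀ : y₀ ∈ C)
    (x₀ : EuclideanSpace ℝ (Fin d))
    (hexp : ∀ y ∈ C, y ≠ y₀ → ⟪x₀, y⟫ < ⟪x₀, y₀⟫)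
    (x : ℕ → EuclideanSpace ℝ (Fin d))
    (hx : ∃ M : ℝ, ∀ n : ℕ, ‖x n - (n : ℝ) • x₀‖ ≤ M)
    (y : ℕ → EuclideanSpace ℝ (Fin d)) (hyC : ∀ n, y n ∈ C)
    (hmax : ∀ n, IsGreatest ((fun y' => ⟪x n, y'⟫) '' C) ⟪x n, y n⟫) :
    Tendsto (fun n => ‖y n - y₀‖) atTop (nhds 0) := by
  obtain ⟨M, hM⟩ := hx
  have hle (n : ℕ) : ⟪x₀, y n⟫ ≤ ⟪x₀, y₀⟫ := by
    rcases eq_or_ne (y n) y₀ with h | h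
    · rw [h]
    · exact (hexp _ (hyC n) h).le
  have hgap (n : ℕ) : n * (⟪x₀, y₀⟫ - ⟪x₀, y n⟫) ≤ M * Metric.diam C :=
    (mul_inner_sub_le_mul_diam_of_isGreatest hCcomp.isBounded (hyC n) hy₀ (hmax n) n).trans
      (mul_le_mul_of_nonneg_right (hM n) Metric.diam_nonneg)
  have hlevel (z : EuclideanSpace ℝ (Fin d)) (hz : z ∈ C) (heq : ⟪x₀, z⟫ = ⟪x₀, y₀⟫) : z = y₀ :=
    by_contra fun hne => (hexp z hz hne).ne heq
  have hy : Tendsto y atTop (𝓝 y₀) :=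
    hCcomp.tendsto_of_tendsto_comp (continuous_const.inner continuous_id) hlevel
      (Eventually.of_forall hyC) (tendsto_of_le_of_natCast_mul_sub_le hle hgap)
  exact tendsto_iff_norm_sub_tendsto_zero.1 hy

/-- If `y₀ ∈ C` is exposed by `x₀` with `⟪x₀, y₀⟫ = 1`, and `xₙ` stays at bounded
distance from `n • x₀`, then any maximizers `yₙ` of `y ↦ ⟪xₙ, y⟫` on `C` converge to `y₀`. -/
theorem maximizers_converge_to_exposed_point
    (d : ℕ) (C : Set (EuclideanSpace ℝ (Fin d)))
    (hCcomp : IsCompact C) (hCconv : Convex ℝ C)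
    (y₀ : EuclideanSpace ℝ (Fin d)) (hy₀ : y₀ ∈ C)
    (x₀ : EuclideanSpace ℝ (Fin d))
    (hexp : ∀ y ∈ C, y ≠ y₀ → ⟪x₀, y⟫ < ⟪x₀, y₀⟫)
    (hnorm : ⟪x₀, y₀⟫ = 1)
    (x : ℕ → EuclideanSpace ℝ (Fin d))
    (hx : ∃ M : ℝ, ∀ n : ℕ, ‖x n - (n : ℝ) • x₀‖ ≤ M)
    (y : ℕ → EuclideanSpace ℝ (Fin d)) (hyC : ∀ n, y n ∈ C)
    (hmax : ∀ n, IsGreatest ((fun y' => ⟪x n, y'⟫) '' C) ⟪x n, y n⟫) :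
    Tendsto (fun n => ‖y n - y₀‖) atTop (nhds 0) :=
  maximizers_converge_to_exposed_point_general d C hCcomp y₀ hy₀ x₀ hexp x hx y hyC hmax
end
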